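/- arXiv:1401.0062 — 2 statements merged into one kernel-verified Lean document; each statement's English description precedes it below -/
import Mathlib

section
/- For all real numbers r > 0 and θ > 0, max{r, 1} ≤ max{r, r⁻¹} · θ · (ψ(r+θ) − ψ(θ)). Equivalently, the expected number of trials 𝔼η = max{r,1}/(θ[ψ(r+θ) − ψ(θ)]) of the rejection sampler for the digamma distribution satisfies 𝔼η ≤ max{r, r⁻¹}. -/
/-- Digamma function `ψ(x) = Γ'(x)/Γ(x)`. -/
noncomputable def psi (x : ℝ) : ℝ := deriv Real.Gamma x / Real.Gamma x

/-!
ψ is increasing on `(0, ∞)` (log-convexity of Γ) and satisfies `ψ(x + 1) = ψ(x) + 1/x`; these two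
facts alone give the bound. For `r ≥ 1`, `ψ(θ + r) - ψ(θ) ≥ ψ(θ + 1) - ψ(θ) = 1/θ`. For `r ≤ 1`,
`g(y) = ψ(y + r) - ψ(y) - r/y` does not increase under `y ↦ y + 1` (since `y + r ≤ y + 1`), while
`g(y) ≥ -r/y → 0` by monotonicity; hence `g ≥ 0`, i.e. `ψ(θ + r) - ψ(θ) ≥ r/θ`. Multiplying by
`max{r, r⁻¹} θ` gives `max{r, 1}` in both cases.
-/

open Set Filter Topology Real

section RecurrenceBounds

variable {f : ℝ → ℝ}

theorem inv_le_sub_of_one_le (hf : MonotoneOn f (Ioi 0))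
    (hf_add_one : ∀ x, 0 < x → f (x + 1) = f x + x⁻¹) {r x : ℝ} (hr : 1 ≤ r) (hx : 0 < x) :
    x⁻¹ ≤ f (x + r) - f x := by
  have := hf (show 0 < x + 1 by linarith) (show 0 < x + r by linarith) (by linarith)
  linarith [hf_add_one x hx]

theorem div_le_sub_of_le_one (hf : MonotoneOn f (Ioi 0))
    (hf_add_one : ∀ x, 0 < x → f (x + 1) = f x + x⁻¹) {r x : ℝ} (hr : 0 < r) (hr1 : r ≤ 1)
    (hx : 0 < x) : r / x ≤ f (x + r) - f x := by
  set g : ℝ → ℝ := fun y ↦ f (y + r) - f y - r / y with hg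
  have g_add_one_le : ∀ y, 0 < y → g (y + 1) ≤ g y := by
    intro y hy
    have key : r / y - r / (y + 1) ≤ y⁻¹ - (y + r)⁻¹ := by
      rw [div_sub_div _ _ hy.ne' (by positivity), inv_sub_inv hy.ne' (by positivity),
        div_le_div_iff₀ (by positivity) (by positivity)]
      nlinarith [mul_nonneg (mul_nonneg hr.le hy.le) (sub_nonneg.2 hr1)]
    have hshift : y + 1 + r = y + r + 1 := by ring
    simp only [hg, hshift, hf_add_one y hy, hf_add_one (y + r) (by positivity)]
    linarith
  have g_add_nat_le : ∀ n : ℕ, g (x + n) ≤ g x := by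
    intro n
    induction n with
    | zero => simp
    | succ n ih =>
      push_cast
      rw [← add_assoc]
      exact (g_add_one_le _ (by positivity)).trans ih
  have neg_div_le_g : ∀ n : ℕ, -(r / (x + n)) ≤ g (x + n) := by
    intro n
    have := hf (show 0 < x + n by positivity) (show 0 < x + n + r by positivity) (by linarith)
    simp only [hg]
    linarith
  have tendsto_neg_div : Tendsto (fun n : ℕ ↦ -(r / (x + n))) atTop (𝓝 0) := by
    simpa using (tendsto_const_nhds.div_atTop
      (tendsto_atTop_add_const_left _ x tendsto_natCast_atTop_atTop)).neg
  have : 0 ≤ g x := le_of_tendsto' tendsto_neg_div fun n ↦ (neg_div_le_g n).trans (g_add_nat_le n)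
  simp only [hg] at this
  linarith

end RecurrenceBounds

theorem differentiableAt_Gamma_of_pos {x : ℝ} (hx : 0 < x) : DifferentiableAt ℝ Gamma x :=
  differentiableOn_Gamma_Ioi.differentiableAt (Ioi_mem_nhds hx)

theorem psi_eq_logDeriv : psi = logDeriv Gamma := rfl

theorem psi_monotoneOn : MonotoneOn psi (Ioi 0) := by
  have hdiff : ∀ x ∈ Ioi (0 : ℝ), DifferentiableAt ℝ (log ∘ Gamma) x := fun x hx ↦
    (differentiableAt_Gamma_of_pos hx).log (Gamma_pos_of_pos hx).ne'
  refine (convexOn_log_Gamma.monotoneOn_deriv hdiff).congr fun x hx ↦ ?_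
  exact deriv_log_comp_eq_logDeriv (differentiableAt_Gamma_of_pos hx) (Gamma_pos_of_pos hx).ne'

theorem psi_add_one {x : ℝ} (hx : 0 < x) : psi (x + 1) = psi x + x⁻¹ := by
  have hGamma : (fun y ↦ Gamma (y + 1)) =ᶠ[𝓝 x] fun y ↦ y * Gamma y := by
    filter_upwards [eventually_gt_nhds hx] with y hy using Gamma_add_one hy.ne'
  have hcomp := logDeriv_comp (f := Gamma) (g := fun y ↦ y + 1) (x := x)
    (differentiableAt_Gamma_of_pos (by linarith)) (differentiableAt_id.add_const 1)
  simp only [deriv_add_const, deriv_id'', mul_one] at hcomp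
  rw [psi_eq_logDeriv, ← hcomp, Function.comp_def, (logDeriv_congr_nhds hGamma).eq_of_nhds,
    logDeriv_mul (f := fun y ↦ y) x hx.ne' (Gamma_pos_of_pos hx).ne' differentiableAt_fun_id
    (differentiableAt_Gamma_of_pos hx), logDeriv_id', one_div, add_comm]

theorem stmt_4 (r θ : ℝ) (hr : 0 < r) (hθ : 0 < θ) :
    max r 1 ≤ max r r⁻¹ * θ * (psi (r + θ) - psi θ) := by
  rw [add_comm r θ]
  rcases le_total 1 r with h1 | h1
  · have hΔ := inv_le_sub_of_one_le psi_monotoneOn (fun _ ↦ psi_add_one) h1 hθ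
    rw [max_eq_left h1, max_eq_left ((inv_le_one_of_one_le₀ h1).trans h1)]
    calc r = r * θ * θ⁻¹ := by field_simp
      _ ≤ r * θ * (psi (θ + r) - psi θ) := by gcongr
  · have hΔ := div_le_sub_of_le_one psi_monotoneOn (fun _ ↦ psi_add_one) hr h1 hθ
    rw [max_eq_right h1, max_eq_right (h1.trans ((one_le_inv₀ hr).mpr h1))]
    calc 1 = r⁻¹ * θ * (r / θ) := by field_simp
      _ ≤ r⁻¹ * θ * (psi (θ + r) - psi θ) := by gcongr
end

section
/- For all real numbers r > 0, α > 0, β > 0, ∑_{z=0}^∞ ((r)_z / z!) · B(z+α, r+β) = B(α, β). In particular, the beta negative binomial distribution BNB(r, α, β) is a probability mass function: ∑_{z=0}^∞ BNB(z; r, α, β) = 1. -/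
open scoped BigOperators

/-- Rising factorial `(a)_z = a(a+1)⋯(a+z-1)`. -/
noncomputable def risingFac (a : ℝ) (z : ℕ) : ℝ := ∏ i ∈ Finset.range z, (a + i)

/-- Beta function `B(α,β) = Γ(α)Γ(β)/Γ(α+β)`. -/
noncomputable def betaFn (a b : ℝ) : ℝ := Real.Gamma a * Real.Gamma b / Real.Gamma (a + b)

/-- Probability mass function of the beta negative binomial distribution. -/
noncomputable def BNBpmf (r α β : ℝ) (z : ℕ) : ℝ :=
  (risingFac r z / z.factorial) * (betaFn (z + α) (r + β) / betaFn α β)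

/-!
Expanding `(1 - x) ^ (-r)` by the binomial series gives, for `0 < x < 1`,
`∑ (r)_z / z! · x ^ (z + α - 1) (1 - x) ^ (r + β - 1) = x ^ (α - 1) (1 - x) ^ (β - 1)`.
All terms are nonnegative, so the series dominates itself and may be integrated term by term
over `(0, 1)`; the beta integrals `B(z + α, r + β)` and `B(α, β)` appear on the two sides.
-/

open Set MeasureTheory

lemma hasSum_integral_of_nonneg {ι α : Type*} [Countable ι] [MeasurableSpace α]
    {μ : Measure α} {F : ι → α → ℝ} {f : α → ℝ} (hF_meas : ∀ n, AEStronglyMeasurable (F n) μ)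
    (hF_nonneg : ∀ n, 0 ≤ᵐ[μ] F n) (h_lim : ∀ᵐ x ∂μ, HasSum (fun n => F n x) (f x))
    (hf : Integrable f μ) :
    HasSum (fun n => ∫ x, F n x ∂μ) (∫ x, f x ∂μ) :=
  hasSum_integral_of_dominated_convergence F hF_meas
    (fun n => (hF_nonneg n).mono fun _ hx => (Real.norm_of_nonneg hx).le)
    (h_lim.mono fun _ hx => hx.summable)
    (hf.congr (h_lim.mono fun _ hx => hx.tsum_eq.symm)) h_lim

lemma risingFac_pos {a : ℝ} (ha : 0 < a) (n : ℕ) : 0 < risingFac a n :=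
  Finset.prod_pos fun _ _ => by positivity

lemma risingFac_eq_ascPochhammer_eval (a : ℝ) (n : ℕ) :
    risingFac a n = (ascPochhammer ℝ n).eval a := by
  induction n with
  | zero => simp [risingFac]
  | succ n ih => rw [ascPochhammer_succ_eval, ← ih, risingFac, risingFac, Finset.prod_range_succ]

lemma choose_add_sub_one_eq_risingFac_div_factorial (a : ℝ) (n : ℕ) :
    Ring.choose (a + n - 1) n = risingFac a n / n.factorial := by
  rw [Ring.choose_eq_smul, Polynomial.descPochhammer_smeval_eq_ascPochhammer,
    Polynomial.ascPochhammer_smeval_eq_eval, risingFac_eq_ascPochhammer_eval, smul_eq_mul,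
    inv_mul_eq_div]
  congr 3
  ring

lemma hasSum_risingFac_div_factorial_mul_pow (a : ℝ) {x : ℝ} (hx : |x| < 1) :
    HasSum (fun n => risingFac a n / n.factorial * x ^ n) ((1 - x) ^ (-a)) := by
  have hx1 : 0 ≤ 1 - x := by linarith [le_abs_self x]
  have h := (Real.one_div_one_sub_rpow_hasFPowerSeriesOnBall_zero a).hasSum
    (y := x) (by simpa [edist_dist] using hx)
  simpa [FormalMultilinearSeries.ofScalars_apply_eq,
    choose_add_sub_one_eq_risingFac_div_factorial, Real.rpow_neg hx1, mul_comm] using h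

noncomputable def betaIntegrand (a b x : ℝ) : ℝ := x ^ (a - 1) * (1 - x) ^ (b - 1)

lemma measurable_betaIntegrand (a b : ℝ) : Measurable (betaIntegrand a b) := by
  unfold betaIntegrand
  fun_prop

lemma betaIntegrand_nonneg (a b : ℝ) {x : ℝ} (hx : x ∈ Icc (0 : ℝ) 1) :
    0 ≤ betaIntegrand a b x :=
  mul_nonneg (Real.rpow_nonneg hx.1 _) (Real.rpow_nonneg (sub_nonneg.2 hx.2) _)

lemma ofReal_betaIntegrand (a b : ℝ) {x : ℝ} (hx : x ∈ Icc (0 : ℝ) 1) :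
    (betaIntegrand a b x : ℂ) = (x : ℂ) ^ ((a : ℂ) - 1) * (1 - (x : ℂ)) ^ ((b : ℂ) - 1) := by
  rw [betaIntegrand, Complex.ofReal_mul, Complex.ofReal_cpow hx.1,
    Complex.ofReal_cpow (sub_nonneg.2 hx.2)]
  push_cast
  rfl

lemma integrableOn_betaIntegrand {a b : ℝ} (ha : 0 < a) (hb : 0 < b) :
    IntegrableOn (betaIntegrand a b) (Ioo 0 1) := by
  have h := Complex.betaIntegral_convergent (u := a) (v := b) (by simpa) (by simpa)
  rw [intervalIntegrable_iff_integrableOn_Ioc_of_le zero_le_one] at h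
  refine (IntegrableOn.congr_fun h.re (fun x hx => ?_) measurableSet_Ioc).mono_set
    Ioo_subset_Ioc_self
  rw [← ofReal_betaIntegrand a b (Ioc_subset_Icc_self hx)]
  rfl

lemma Complex.betaIntegral_ofReal (a b : ℝ) :
    Complex.betaIntegral a b = ((∫ x in Ioo 0 1, betaIntegrand a b x : ℝ) : ℂ) := by
  rw [← integral_Ioc_eq_integral_Ioo, ← intervalIntegral.integral_of_le zero_le_one,
    ← intervalIntegral.integral_ofReal, Complex.betaIntegral]
  refine intervalIntegral.integral_congr fun x hx => ?_
  rw [Set.uIcc_of_le zero_le_one] at hx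
  exact (ofReal_betaIntegrand a b hx).symm

lemma betaFn_eq_integral {a b : ℝ} (ha : 0 < a) (hb : 0 < b) :
    betaFn a b = ∫ x in Ioo 0 1, betaIntegrand a b x := by
  rw [show betaFn a b = ProbabilityTheory.beta a b from rfl,
    ProbabilityTheory.beta_eq_betaIntegralReal a b ha hb, Complex.betaIntegral_ofReal,
    Complex.ofReal_re]

lemma hasSum_risingFac_div_factorial_mul_betaIntegrand (r a b : ℝ) {x : ℝ}
    (hx : x ∈ Ioo (0 : ℝ) 1) :
    HasSum (fun z : ℕ => risingFac r z / z.factorial * betaIntegrand (z + a) (r + b) x)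
      (betaIntegrand a b x) := by
  have hx1 : 0 < 1 - x := sub_pos.2 hx.2
  have hsum : betaIntegrand a b x = (1 - x) ^ (-r) * betaIntegrand a (r + b) x := by
    rw [betaIntegrand, betaIntegrand, mul_left_comm, ← Real.rpow_add hx1]
    ring_nf
  rw [hsum]
  refine ((hasSum_risingFac_div_factorial_mul_pow r
    (abs_lt.2 ⟨by linarith [hx.1], hx.2⟩)).mul_right _).congr_fun fun z => ?_
  rw [betaIntegrand, betaIntegrand, add_sub_assoc, Real.rpow_add hx.1, Real.rpow_natCast]
  ring

lemma hasSum_risingFac_div_factorial_mul_betaFn {r α β : ℝ} (hr : 0 < r) (hα : 0 < α)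
    (hβ : 0 < β) :
    HasSum (fun z : ℕ => risingFac r z / z.factorial * betaFn (z + α) (r + β))
      (betaFn α β) := by
  have h := hasSum_integral_of_nonneg (μ := volume.restrict (Ioo 0 1))
    (F := fun (z : ℕ) x => risingFac r z / z.factorial * betaIntegrand (z + α) (r + β) x)
    (fun z => ((measurable_betaIntegrand _ _).const_mul _).aestronglyMeasurable)
    (fun z => ae_restrict_of_forall_mem measurableSet_Ioo fun x hx =>
      mul_nonneg (div_pos (risingFac_pos hr z) (by positivity)).le
        (betaIntegrand_nonneg _ _ (Ioo_subset_Icc_self hx)))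
    (ae_restrict_of_forall_mem measurableSet_Ioo fun x hx =>
      hasSum_risingFac_div_factorial_mul_betaIntegrand r α β hx)
    (integrableOn_betaIntegrand hα hβ)
  rw [betaFn_eq_integral hα hβ]
  refine h.congr_fun fun z => ?_
  rw [integral_const_mul, betaFn_eq_integral (by positivity) (by positivity)]

theorem stmt_6 (r α β : ℝ) (hr : 0 < r) (hα : 0 < α) (hβ : 0 < β) :
    HasSum (fun z : ℕ => (risingFac r z / z.factorial) * betaFn (z + α) (r + β))
      (betaFn α β) ∧
    HasSum (fun z : ℕ => BNBpmf r α β z) 1 := by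
  have hsum := hasSum_risingFac_div_factorial_mul_betaFn hr hα hβ
  have hB : betaFn α β ≠ 0 := (ProbabilityTheory.beta_pos hα hβ).ne'
  refine ⟨hsum, ?_⟩
  simpa only [BNBpmf, mul_div_assoc, div_self hB] using hsum.div_const (betaFn α β)
end
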